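/- arXiv:1408.5085 — 3 statements merged into one kernel-verified Lean document; each statement's English description precedes it below -/
import Mathlib

section
/- Let V be a finite-dimensional real vector space, let T_1, ..., T_n be linearly independent elements of the dual space V*, and let Q be a quadratic form on V whose restriction to the subspace ∩_{i=1}^n Ker T_i is not identically zero. If F(z_0, z_1, ..., z_n) is a real polynomial in n+1 variables such that the function V → ℝ given by v ↦ F(Q(v), T_1(v), ..., T_n(v)) is identically zero, then F is the zero polynomial. (In other words, Q, T_1, ..., T_n are algebraically independent.) -/
open Polynomial

/-!
The functionals `T i` are linearly independent, so `v ↦ (T i v)ᵢ` is onto, and any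
`t : Fin n → ℝ` is attained at some `w`. Moving along the line `s • v + w` with `v` in the
common kernel keeps `(T i)ᵢ = t` fixed while `Q (s • v + w)` runs through the values of a
degree-two polynomial `q`. Hence `F (·, t) ∘ q = 0`, forcing `F (·, t) = 0`, and since `t` was
arbitrary, `F = 0`.
-/

theorem LinearIndependent.surjective_pi {K V ι : Type*} [Field K] [AddCommGroup V] [Module K V]
    [Finite ι] {T : ι → Module.Dual K V} (hT : LinearIndependent K T) :
    Function.Surjective (LinearMap.pi T) := by
  have hT' : LinearIndependent K fun i (v : V) => T i v :=
    hT.map' (LinearMap.ltoFun K V K K) (LinearMap.ker_eq_bot.mpr DFunLike.coe_injective)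
  rw [← LinearMap.range_eq_top, ← Submodule.span_eq (LinearMap.range _),
    ← span_flip_eq_top_iff_linearIndependent.mpr hT', LinearMap.coe_range]
  rfl

namespace QuadraticMap

variable {R M : Type*} [CommRing R] [AddCommGroup M] [Module R M]

theorem apply_smul_add_eq_eval (Q : QuadraticMap R M R) (s : R) (v w : M) :
    Q (s • v + w) = (C (Q v) * X ^ 2 + C (polar Q v w) * X + C (Q w)).eval s := by
  rw [QuadraticMap.map_add Q, QuadraticMap.map_smul, polar_smul_left]
  simp only [eval_add, eval_mul, eval_C, eval_pow, eval_X, smul_eq_mul]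
  ring

theorem eq_zero_of_eval_apply_smul_add_eq_zero [IsDomain R] [Infinite R] (Q : QuadraticMap R M R)
    {v : M} (hv : Q v ≠ 0) (w : M) {p : R[X]} (hp : ∀ s : R, p.eval (Q (s • v + w)) = 0) :
    p = 0 := by
  set q := C (Q v) * X ^ 2 + C (polar Q v w) * X + C (Q w)
  have hpq : p.comp q = 0 := Polynomial.funext fun s => by
    rw [eval_comp, ← apply_smul_add_eq_eval, hp, eval_zero]
  have hq : q ≠ C (q.coeff 0) := fun h => by
    simpa [q, natDegree_quadratic hv] using congrArg natDegree h
  exact (comp_eq_zero_iff.mp hpq).resolve_right fun h => hq h.2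

end QuadraticMap

theorem algebraic_independence_of_functionals_and_quadratic_form_general
    {V : Type*} [AddCommGroup V] [Module ℝ V]
    {n : ℕ} (T : Fin n → Module.Dual ℝ V) (hT : LinearIndependent ℝ T)
    (Q : QuadraticForm ℝ V)
    (hQ : ∃ v : V, (∀ i, T i v = 0) ∧ Q v ≠ 0)
    (F : MvPolynomial (Fin (n + 1)) ℝ)
    (hF : ∀ v : V, MvPolynomial.eval (Fin.cons (Q v) fun i => T i v) F = 0) :
    F = 0 := by
  obtain ⟨v, hvT, hvQ⟩ := hQ
  refine MvPolynomial.funext fun x => ?_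
  obtain ⟨w, hw⟩ := hT.surjective_pi (Fin.tail x)
  suffices (MvPolynomial.finSuccEquiv ℝ n F).map (MvPolynomial.eval (Fin.tail x)) = 0 by
    rw [map_zero, ← Fin.cons_self_tail x, MvPolynomial.eval_eq_eval_mv_eval', this, eval_zero]
  refine Q.eq_zero_of_eval_apply_smul_add_eq_zero hvQ w fun s => ?_
  rw [← MvPolynomial.eval_eq_eval_mv_eval', ← hF (s • v + w), ← hw]
  congr
  funext i
  simp [hvT]

/-- **Lemma 4.1 (algebraic independence).** Let `V` be a finite-dimensional real vector
space, `T_1, …, T_n` linearly independent linear functionals on `V`, and `Q` a quadratic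
form on `V` whose restriction to `⋂ ker T_i` is not identically zero. If a real polynomial
`F` in `n + 1` variables satisfies `F (Q v, T_1 v, …, T_n v) = 0` for all `v ∈ V`, then
`F` is the zero polynomial. -/
theorem algebraic_independence_of_functionals_and_quadratic_form
    {V : Type*} [AddCommGroup V] [Module ℝ V] [FiniteDimensional ℝ V]
    {n : ℕ} (T : Fin n → Module.Dual ℝ V) (hT : LinearIndependent ℝ T)
    (Q : QuadraticForm ℝ V)
    (hQ : ∃ v : V, (∀ i, T i v = 0) ∧ Q v ≠ 0)
    (F : MvPolynomial (Fin (n + 1)) ℝ)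
    (hF : ∀ v : V, MvPolynomial.eval (Fin.cons (Q v) fun i => T i v) F = 0) :
    F = 0 :=
  algebraic_independence_of_functionals_and_quadratic_form_general T hT Q hQ F hF
end

section
/- Let λ be an integer and p : ℤ → ℝ a function. If there exists a real polynomial P of degree at most n such that (∇^1_λ p)(x) = p(x) − p(x + λ) equals P(x) for every x ∈ ℤ, then there exists a real polynomial R of degree at most n + 1 such that p(λx) = R(x) for every x ∈ ℤ. -/
/-!
Reparametrise by `x ↦ λ x`: the function `f x = p (λ x)` satisfies `f x - f (x + 1) = Q x` with
`Q = P ∘ (λ X)` of degree at most `n`. Bernoulli polynomials give a polynomial antidifference `S`,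
`S (x + 1) - S x = Q x`, of degree at most `n + 1`; then `f + S` has period `1` on `ℤ`, hence is
constant, and `f = c - S`.
-/

/-- The difference operator `(∇^1_λ p)(x) := p(x) − p(x + λ)` for `p : ℤ → ℝ`. -/
noncomputable def nablaOne (l : ℤ) (p : ℤ → ℝ) : ℤ → ℝ :=
  fun x => p x - p (x + l)

open Finset

namespace Polynomial

theorem natDegree_comp_C_mul_X_le {R : Type*} [Semiring R] (P : R[X]) (r : R) :
    (P.comp (C r * X)).natDegree ≤ P.natDegree :=
  natDegree_le_iff_coeff_eq_zero.2 fun k hk => by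
    rw [comp_C_mul_X_coeff, coeff_eq_zero_of_natDegree_lt hk, zero_mul]

theorem natDegree_bernoulli_le (n : ℕ) : (bernoulli n).natDegree ≤ n := by
  rw [bernoulli]
  exact natDegree_sum_le_of_forall_le _ _ fun i _ =>
    (natDegree_monomial_le _).trans (Nat.sub_le n i)

variable {K : Type*} [Field K] [CharZero K]

theorem exists_comp_X_add_one_sub_eq_X_pow (k : ℕ) :
    ∃ S : K[X], S.natDegree ≤ k + 1 ∧ S.comp (X + 1) - S = X ^ k := by
  -- `B_{k+1}(x + 1) - B_{k+1}(x) = (k + 1) x ^ k`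
  refine ⟨C ((k + 1 : K)⁻¹) * (bernoulli (k + 1)).map (algebraMap ℚ K), ?_, ?_⟩
  · exact (natDegree_C_mul_le _ _).trans ((natDegree_map_le).trans (natDegree_bernoulli_le _))
  · have h := congrArg (map (algebraMap ℚ K)) (bernoulli_comp_one_add_X (k + 1))
    rw [map_comp, add_comm (1 : ℚ[X])] at h
    simp only [Polynomial.map_add, Polynomial.map_X, Polynomial.map_one, add_tsub_cancel_right] at h
    rw [mul_comp, C_comp, h, ← mul_sub, add_sub_cancel_left, nsmul_eq_mul, Polynomial.map_mul,
      Polynomial.map_natCast, Polynomial.map_pow, Polynomial.map_X, ← mul_assoc, ← C_eq_natCast,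
      ← C_mul]
    have hk : (k + 1 : K) ≠ 0 := by exact_mod_cast k.succ_ne_zero
    push_cast
    rw [inv_mul_cancel₀ hk, C_1, one_mul]

theorem exists_comp_X_add_one_sub_eq (Q : K[X]) :
    ∃ S : K[X], S.natDegree ≤ Q.natDegree + 1 ∧ S.comp (X + 1) - S = Q := by
  choose T hTdeg hT using exists_comp_X_add_one_sub_eq_X_pow (K := K)
  refine ⟨∑ k ∈ range (Q.natDegree + 1), C (Q.coeff k) * T k, ?_, ?_⟩
  · refine natDegree_sum_le_of_forall_le _ _ fun k hk => (natDegree_C_mul_le _ _).trans ?_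
    exact (hTdeg k).trans (by simpa using mem_range.1 hk)
  · conv_rhs => rw [as_sum_range_C_mul_X_pow Q]
    simp only [sum_comp, mul_comp, C_comp, ← sum_sub_distrib, ← mul_sub, hT]

theorem exists_natDegree_le_eval_eq_of_sub_eval_succ {f : ℤ → K} {Q : K[X]}
    (hf : ∀ x : ℤ, f x - f (x + 1) = Q.eval (x : K)) :
    ∃ R : K[X], R.natDegree ≤ Q.natDegree + 1 ∧ ∀ x : ℤ, f x = R.eval (x : K) := by
  obtain ⟨S, hSdeg, hS⟩ := exists_comp_X_add_one_sub_eq Q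
  have hper : Function.Periodic (fun x : ℤ => f x + S.eval (x : K)) 1 := fun x => by
    have hSx := congrArg (eval (x : K)) hS
    simp only [eval_sub, eval_comp, eval_add, eval_X, eval_one] at hSx
    push_cast
    linear_combination hSx - hf x
  refine ⟨C (f 0 + S.eval 0) - S, (natDegree_sub_le _ _).trans (max_le (by simp) hSdeg), ?_⟩
  intro x
  have hx := hper.int_mul x 0
  simp only [Int.cast_id, mul_one, zero_add, Int.cast_zero] at hx
  rw [eval_sub, eval_C, ← hx]
  ring

end Polynomial

/-- **Lemma 4.4 (1).** If `∇^1_λ p` agrees on `ℤ` with a real polynomial of degree at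
most `n`, then `x ↦ p(λ x)` agrees on `ℤ` with a real polynomial of degree at most
`n + 1`. -/
theorem poly_of_nablaOne_poly (l : ℤ) (p : ℤ → ℝ) (n : ℕ)
    (h : ∃ P : Polynomial ℝ, P.natDegree ≤ n ∧ ∀ x : ℤ, nablaOne l p x = P.eval (x : ℝ)) :
    ∃ R : Polynomial ℝ, R.natDegree ≤ n + 1 ∧ ∀ x : ℤ, p (l * x) = R.eval (x : ℝ) := by
  obtain ⟨P, hPdeg, hP⟩ := h
  have hdiff : ∀ x : ℤ,
      p (l * x) - p (l * (x + 1)) = (P.comp (Polynomial.C (l : ℝ) * Polynomial.X)).eval (x : ℝ) := by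
    intro x
    simpa [nablaOne, mul_add_one] using hP (l * x)
  obtain ⟨R, hRdeg, hR⟩ := Polynomial.exists_natDegree_le_eval_eq_of_sub_eval_succ hdiff
  exact ⟨R, hRdeg.trans (Nat.add_le_add_right ((P.natDegree_comp_C_mul_X_le _).trans hPdeg) 1), hR⟩
end

section
/- Let V be a real vector space, A a finite index set, c : A → ℝ a function, and K_a ∈ V* a linear functional for each a ∈ A. Fix a natural number i and suppose that Σ_{a ∈ A} c(a) · (K_a(h))^i = 0 for every h ∈ V. Then for all natural numbers j, u with j + u = i and all h_1, h_2 ∈ V, Σ_{a ∈ A} c(a) · K_a(h_1)^j · K_a(h_2)^u = 0. -/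
/-! The map `t ↦ Σ_a c(a) (K_a(h₁) + t K_a(h₂))^i` is a polynomial in `t` that vanishes on all
of `ℝ`, so each of its coefficients vanishes; the coefficient of `t^u` is
`(i choose u) Σ_a c(a) K_a(h₁)^j K_a(h₂)^u`, and the binomial coefficient is nonzero. -/

open Polynomial

theorem Polynomial.coeff_C_mul_X_add_C_pow {R : Type*} [CommRing R] (x y : R) (n k : ℕ) :
    ((C y * X + C x) ^ n).coeff k = x ^ (n - k) * y ^ k * n.choose k := by
  have hcomp : (C y * X + C x) ^ n = ((X + C x) ^ n).comp (C y * X) := by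
    simp only [pow_comp, add_comp, X_comp, C_comp]
  rw [hcomp, comp_C_mul_X_coeff, coeff_X_add_C_pow]
  ring

theorem Finset.sum_mul_pow_mul_pow_eq_zero_of_forall_sum_mul_pow_eq_zero {R ι : Type*}
    [CommRing R] [IsDomain R] [CharZero R] (s : Finset ι) (c x y : ι → R) {n : ℕ}
    (hvan : ∀ t, ∑ a ∈ s, c a * (y a * t + x a) ^ n = 0) {j u : ℕ} (hju : j + u = n) :
    ∑ a ∈ s, c a * x a ^ j * y a ^ u = 0 := by
  set p : R[X] := ∑ a ∈ s, C (c a) * (C (y a) * X + C (x a)) ^ n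
  have hp : p = 0 := Polynomial.funext fun t => by
    simpa [p, eval_finsetSum] using hvan t
  have hcoeff : (∑ a ∈ s, c a * x a ^ j * y a ^ u) * n.choose u = 0 := by
    have := congrArg (coeff · u) hp
    simp only [p, finsetSum_coeff, coeff_C_mul, coeff_C_mul_X_add_C_pow, coeff_zero,
      show n - u = j by omega] at this
    rw [Finset.sum_mul, ← this]
    exact Finset.sum_congr rfl fun a _ => by ring
  exact (mul_eq_zero.mp hcoeff).resolve_right (Nat.cast_ne_zero.mpr (Nat.choose_pos (by omega)).ne')

/-- **Polarization of a vanishing sum of powers of linear functionals.** If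
`Σ_{a ∈ A} c(a) (K_a h)^i = 0` for every `h ∈ V`, then for all `j + u = i` and all
`h₁, h₂ ∈ V`, `Σ_{a ∈ A} c(a) (K_a h₁)^j (K_a h₂)^u = 0`. -/
theorem polarized_vanishing_of_power_sum
    {V : Type*} [AddCommGroup V] [Module ℝ V]
    {A : Type*} [Fintype A] (c : A → ℝ) (K : A → Module.Dual ℝ V) (i : ℕ)
    (hvan : ∀ h : V, ∑ a : A, c a * (K a h) ^ i = 0)
    (j u : ℕ) (hju : j + u = i) (h₁ h₂ : V) :
    ∑ a : A, c a * (K a h₁) ^ j * (K a h₂) ^ u = 0 := by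
  refine Finset.univ.sum_mul_pow_mul_pow_eq_zero_of_forall_sum_mul_pow_eq_zero c _ _
    (fun t => ?_) hju
  simpa [mul_comm t, add_comm] using hvan (h₁ + t • h₂)
end
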